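/- arXiv:1907.00105 — 3 statements merged into one kernel-verified Lean document; each statement's English description precedes it below -/
import Mathlib

section
/- Let r be a positive integer and let i, j be integers with 0 ≤ i ≤ r−1 and 0 ≤ j ≤ r−1. Then the multiset of residues modulo r of the integers i+1, i+2, …, i+j equals the multiset of residues modulo r of the integers 1, 2, …, j if and only if i = 0 or j = 0. -/
/-!
Since `j < r`, the residues of `1, …, j` are exactly the numbers `1, …, j`. When `i` and `j`
are positive, the residues of `i + 1, …, i + j` leave this range: they contain `i + j > j`
if `i + j < r`, and otherwise they contain `r ≡ 0`.
-/

theorem mem_map_range_succ_mod_iff {r j a : ℕ} (hj : j < r) :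
    a ∈ (Multiset.range j).map (fun x => (x + 1) % r) ↔ 1 ≤ a ∧ a ≤ j := by
  simp only [Multiset.mem_map, Multiset.mem_range]
  constructor
  · rintro ⟨x, hx, rfl⟩
    rw [Nat.mod_eq_of_lt (by omega)]
    omega
  · rintro ⟨ha1, haj⟩
    exact ⟨a - 1, by omega, by rw [Nat.sub_add_cancel ha1, Nat.mod_eq_of_lt (by omega)]⟩

theorem exists_lt_add_succ_mod_notMem_Icc {r i j : ℕ} (hi0 : 0 < i) (hi : i < r) (hj0 : 0 < j) :
    ∃ x < j, ¬(1 ≤ (i + x + 1) % r ∧ (i + x + 1) % r ≤ j) := by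
  by_cases hij : i + j < r
  · refine ⟨j - 1, by omega, ?_⟩
    rw [show i + (j - 1) + 1 = i + j by omega, Nat.mod_eq_of_lt hij]
    omega
  · refine ⟨r - 1 - i, by omega, ?_⟩
    rw [show i + (r - 1 - i) + 1 = r by omega, Nat.mod_self]
    omega

theorem emptyrcoresimp_general (r i j : ℕ) (hi : i ≤ r - 1) (hj : j ≤ r - 1) :
    ((Multiset.range j).map (fun x => (i + x + 1) % r)
        = (Multiset.range j).map (fun x => (x + 1) % r))
      ↔ (i = 0 ∨ j = 0) := by
  refine ⟨fun h => ?_, ?_⟩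
  · by_contra! hne
    obtain ⟨x, hxj, hx⟩ := exists_lt_add_succ_mod_notMem_Icc (r := r)
      (Nat.pos_of_ne_zero hne.1) (by omega) (Nat.pos_of_ne_zero hne.2)
    have hmem := Multiset.mem_map_of_mem (fun x => (i + x + 1) % r) (Multiset.mem_range.2 hxj)
    rw [h, mem_map_range_succ_mod_iff (by omega)] at hmem
    exact hx hmem
  · rintro (rfl | rfl) <;> simp

/-- Let `r ≥ 1` and `0 ≤ i ≤ r−1`, `0 ≤ j ≤ r−1`.  The multiset of residues
modulo `r` of `i+1, i+2, …, i+j` equals the multiset of residues modulo `r` of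
`1, 2, …, j` if and only if `i = 0` or `j = 0`. -/
theorem emptyrcoresimp (r i j : ℕ) (hr : 1 ≤ r) (hi : i ≤ r - 1) (hj : j ≤ r - 1) :
    ((Multiset.range j).map (fun x => (i + x + 1) % r)
        = (Multiset.range j).map (fun x => (x + 1) % r))
      ↔ (i = 0 ∨ j = 0) :=
  emptyrcoresimp_general r i j hi hj
end

section
/- Fix b, r ≥ 1 and set m = br. Let w_1, …, w_b be strictly increasing words of length r over {1, …, m} whose entries together are exactly 1, …, m, each occurring once, and for 1 ≤ i ≤ b−1 let c_i be (the maximum length of a strictly increasing subsequence of the concatenation w_i w_{i+1}) minus r. Then for every k ≥ b−1 and every t with 1 ≤ t ≤ b, there exist t pairwise position-disjoint strictly increasing subsequences y_1, …, y_t of the concatenated word W_k = w_1^{(k,m)} w_2^{(k,m)} ⋯ w_b^{(k,m)} such that y_j has length k·r + ∑_{i=j}^{b+j−t−1} c_i (ordinary sum over integers i with j ≤ i ≤ b+j−t−1, empty when t = b). In particular, the maximum total length of t pairwise disjoint strictly increasing subsequences of W_k is at least t·k·r + ∑_{j=1}^{t} ∑_{i=j}^{b+j−t−1} c_i. -/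
/-- The `k`-fold `m`-shifted concatenation `u^{(k,m)} = u (u+m) ⋯ (u+(k−1)m)`
of a word `u` (a word is a finite list of natural numbers). -/
def shiftRep (u : List ℕ) (k m : ℕ) : List ℕ :=
  (List.range k).flatMap (fun i => u.map (fun x => x + i * m))

/-- The concatenated word `W_k = w_1^{(k,m)} w_2^{(k,m)} ⋯ w_b^{(k,m)}`, where
the words `w_1, …, w_b` are indexed starting at `1`. -/
def concatShift (w : ℕ → List ℕ) (b k m : ℕ) : List ℕ :=
  (List.range b).flatMap (fun i => shiftRep (w (i + 1)) k m)

/-- `S` is a set of positions of a strictly increasing subsequence of the word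
`W`. -/
def IsIncSet (W : List ℕ) (S : Finset ℕ) : Prop :=
  (∀ a ∈ S, a < W.length) ∧
  ∀ a ∈ S, ∀ c ∈ S, a < c → W.getD a 0 < W.getD c 0

/-- The maximum length of a strictly increasing subsequence of the word `W`. -/
noncomputable def maxIncLen (W : List ℕ) : ℕ :=
  sSup {n | ∃ S : Finset ℕ, IsIncSet W S ∧ n = S.card}

/-!
Index the positions of `W_k` by a block `β < b` (the copies of `w_{β+1}`), a shift `s < k` and a
column `q < r`; the entries of shift `s` lie in `(s m, (s + 1) m]`. The `j`-th subsequence follows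
a path of blocks: block `j - 1` up to shift `t - j`, then one block higher per shift, ending in
block `b - t + j - 1`. Where its path stays in a block it takes the whole `s`-th copy of that row;
where it climbs from block `β` to `β + 1` it takes, in the `s`-th copies, a longest increasing
subsequence of `w_{β+1} w_{β+2}`, which has `r + c_{β+1}` entries. Since entries grow with the
shift and the path never descends, these pieces form an increasing subsequence; the path of `j`
stays strictly below that of `j + 1` (`β_j(s + 1) < β_{j+1}(s)`), so the subsequences are
disjoint; and as `k ≥ b - 1` all climbs happen, contributing `c_j + ⋯ + c_{b+j-t-1}`.
-/

theorem IsIncSet.card_le_length {W : List ℕ} {S : Finset ℕ} (hS : IsIncSet W S) :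
    S.card ≤ W.length := by
  simpa using Finset.card_le_card fun a ha => Finset.mem_range.2 (hS.1 a ha)

theorem bddAbove_isIncSet_card (W : List ℕ) :
    BddAbove {n | ∃ S : Finset ℕ, IsIncSet W S ∧ n = S.card} :=
  ⟨W.length, by rintro _ ⟨S, hS, rfl⟩; exact hS.card_le_length⟩

theorem IsIncSet.card_le_maxIncLen {W : List ℕ} {S : Finset ℕ} (hS : IsIncSet W S) :
    S.card ≤ maxIncLen W :=
  le_csSup (bddAbove_isIncSet_card W) ⟨S, hS, rfl⟩

theorem exists_isIncSet_card_eq_maxIncLen (W : List ℕ) :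
    ∃ S : Finset ℕ, IsIncSet W S ∧ S.card = maxIncLen W := by
  have hne : {n | ∃ S : Finset ℕ, IsIncSet W S ∧ n = S.card}.Nonempty :=
    ⟨0, ∅, ⟨by simp, by simp⟩, rfl⟩
  obtain ⟨S, hS, hcard⟩ := Nat.sSup_mem hne (bddAbove_isIncSet_card W)
  exact ⟨S, hS, hcard.symm⟩

theorem isIncSet_append_range_length {u : List ℕ} (v : List ℕ) (hu : u.Pairwise (· < ·)) :
    IsIncSet (u ++ v) (Finset.range u.length) := by
  refine ⟨fun a ha => ?_, fun a ha c hc hac => ?_⟩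
  · simp only [Finset.mem_range, List.length_append] at ha ⊢
    omega
  · simp only [Finset.mem_range] at ha hc
    rw [List.getD_append _ _ _ _ ha, List.getD_append _ _ _ _ hc,
      List.getD_eq_getElem _ _ ha, List.getD_eq_getElem _ _ hc]
    exact List.pairwise_iff_getElem.1 hu a c ha hc hac

theorem length_le_maxIncLen_append {u : List ℕ} (v : List ℕ) (hu : u.Pairwise (· < ·)) :
    u.length ≤ maxIncLen (u ++ v) := by
  simpa using (isIncSet_append_range_length v hu).card_le_maxIncLen

theorem IsIncSet.image {W W' : List ℕ} {S : Finset ℕ} {e : ℕ → ℕ} (c : ℕ)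
    (hS : IsIncSet W S) (he : StrictMonoOn e S) (hlt : ∀ p ∈ S, e p < W'.length)
    (hval : ∀ p ∈ S, W'.getD (e p) 0 = W.getD p 0 + c) : IsIncSet W' (S.image e) := by
  refine ⟨by simpa using hlt, ?_⟩
  simp only [Finset.mem_image]
  rintro _ ⟨p, hp, rfl⟩ _ ⟨p', hp', rfl⟩ hpp'
  rw [hval p hp, hval p' hp']
  exact Nat.add_lt_add_right (hS.2 p hp p' hp' ((he.lt_iff_lt hp hp').1 hpp')) c

theorem IsIncSet.biUnion_range {W : List ℕ} {P : ℕ → Finset ℕ} {k : ℕ}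
    (hP : ∀ s < k, IsIncSet W (P s))
    (hlt : ∀ s s', s < s' → s' < k →
      ∀ a ∈ P s, ∀ c ∈ P s', a < c ∧ W.getD a 0 < W.getD c 0) :
    IsIncSet W ((Finset.range k).biUnion P) := by
  simp only [IsIncSet, Finset.mem_biUnion, Finset.mem_range]
  refine ⟨fun a ⟨s, hs, ha⟩ => (hP s hs).1 a ha, ?_⟩
  rintro a ⟨s, hs, ha⟩ c ⟨s', hs', hc⟩ hac
  rcases lt_trichotomy s s' with h | rfl | h
  · exact (hlt s s' h hs' a ha c hc).2
  · exact (hP s hs).2 a ha c hc hac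
  · exact absurd hac (hlt s' s h hs c hc a ha).1.asymm

namespace List

variable {α : Type*}

theorem length_flatMap_range_of_length_eq {g : ℕ → List α} {n L : ℕ}
    (hg : ∀ i < n, (g i).length = L) : ((range n).flatMap g).length = n * L := by
  induction n with
  | zero => simp
  | succ n ih =>
    simp [range_succ, ih fun i hi => hg i (by omega), hg n (by omega), Nat.succ_mul]

theorem getD_flatMap_range_of_length_eq {g : ℕ → List α} {n L i q : ℕ} (d : α)
    (hg : ∀ i < n, (g i).length = L) (hi : i < n) (hq : q < L) :
    ((range n).flatMap g).getD (i * L + q) d = (g i).getD q d := by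
  induction n with
  | zero => omega
  | succ n ih =>
    have hlen := length_flatMap_range_of_length_eq fun i (hi : i < n) => hg i (by omega)
    rw [range_succ, flatMap_append]
    rcases Nat.lt_or_ge i n with h | h
    · rw [getD_append _ _ _ _ (by rw [hlen]; nlinarith)]
      exact ih (fun i hi => hg i (by omega)) h
    · obtain rfl : i = n := by omega
      rw [getD_append_right _ _ _ _ (by rw [hlen]; omega), hlen]
      simp

end List

theorem length_shiftRep (u : List ℕ) (k m : ℕ) : (shiftRep u k m).length = k * u.length :=
  List.length_flatMap_range_of_length_eq fun _ _ => List.length_map _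

theorem getD_shiftRep {u : List ℕ} {k m s q : ℕ} (hs : s < k) (hq : q < u.length) :
    (shiftRep u k m).getD (s * u.length + q) 0 = u.getD q 0 + s * m := by
  rw [shiftRep, List.getD_flatMap_range_of_length_eq _ (fun _ _ => List.length_map _) hs hq,
    List.getD_eq_getElem _ _ (by simpa using hq), List.getElem_map, List.getD_eq_getElem _ _ hq]

theorem Nat.mul_add_lt_mul_add {a a' q q' r : ℕ} (hq : q < r) (h : a < a') :
    a * r + q < a' * r + q' := by
  nlinarith

theorem Nat.eq_and_eq_of_mul_add_eq {a a' q q' r : ℕ} (hq : q < r) (hq' : q' < r)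
    (h : a * r + q = a' * r + q') : a = a' ∧ q = q' := by
  rcases lt_trichotomy a a' with ha | rfl | ha
  · exact absurd h (Nat.mul_add_lt_mul_add hq ha).ne
  · exact ⟨rfl, by omega⟩
  · exact absurd h (Nat.mul_add_lt_mul_add hq' ha).ne'

namespace DisjointIncSubseqs

/-- Position in `W_k` of column `q` of the `s`-th shifted copy of `w_{blk+1}`. -/
def pos (k r blk s q : ℕ) : ℕ := (blk * k + s) * r + q

section pos

variable {k r blk blk' s s' q q' : ℕ}

theorem pos_lt_pos_of_lt_shift (hq : q < r) (hblk : blk ≤ blk') (hs : s < s') :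
    pos k r blk s q < pos k r blk' s' q' :=
  Nat.mul_add_lt_mul_add hq (by nlinarith)

theorem pos_lt_pos_of_lt_block (hq : q < r) (hs : s < k) (hblk : blk < blk') :
    pos k r blk s q < pos k r blk' s' q' :=
  Nat.mul_add_lt_mul_add hq (by nlinarith)

theorem pos_inj (hs : s < k) (hs' : s' < k) (hq : q < r) (hq' : q' < r)
    (h : pos k r blk s q = pos k r blk' s' q') : blk = blk' ∧ s = s' ∧ q = q' := by
  obtain ⟨hhigh, rfl⟩ := Nat.eq_and_eq_of_mul_add_eq hq hq' h
  obtain ⟨rfl, rfl⟩ := Nat.eq_and_eq_of_mul_add_eq hs hs' hhigh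
  exact ⟨rfl, rfl, rfl⟩

end pos

section concatShift

variable {w : ℕ → List ℕ} {b r m k blk s q : ℕ}

theorem length_concatShift (hlen : ∀ i, 1 ≤ i → i ≤ b → (w i).length = r) :
    (concatShift w b k m).length = b * (k * r) :=
  List.length_flatMap_range_of_length_eq fun i hi => by
    rw [length_shiftRep, hlen (i + 1) (by omega) (by omega)]

theorem pos_lt_length_concatShift (hlen : ∀ i, 1 ≤ i → i ≤ b → (w i).length = r)
    (hblk : blk < b) (hs : s < k) (hq : q < r) :
    pos k r blk s q < (concatShift w b k m).length := by
  rw [length_concatShift hlen, pos]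
  calc (blk * k + s) * r + q < (blk * k + s + 1) * r := by nlinarith
    _ ≤ (b * k) * r := Nat.mul_le_mul_right r (by nlinarith)
    _ = b * (k * r) := Nat.mul_assoc b k r

theorem getD_concatShift_pos (hlen : ∀ i, 1 ≤ i → i ≤ b → (w i).length = r)
    (hblk : blk < b) (hs : s < k) (hq : q < r) :
    (concatShift w b k m).getD (pos k r blk s q) 0 = (w (blk + 1)).getD q 0 + s * m := by
  have hrow := hlen (blk + 1) (by omega) (by omega)
  have hsq : s * r + q < k * r := by nlinarith
  rw [concatShift, show pos k r blk s q = blk * (k * r) + (s * r + q) by rw [pos]; ring,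
    List.getD_flatMap_range_of_length_eq _ (fun i hi => by
      rw [length_shiftRep, hlen (i + 1) (by omega) (by omega)]) hblk hsq, ← hrow,
    getD_shiftRep hs (hrow ▸ hq)]

theorem mem_Icc_of_mem_of_perm
    (hperm : ((List.range b).flatMap (fun i => w (i + 1))).Perm (List.range' 1 m))
    {i x : ℕ} (hi : 1 ≤ i) (hib : i ≤ b) (hx : x ∈ w i) : 1 ≤ x ∧ x ≤ m := by
  have hmem : x ∈ (List.range b).flatMap (fun i => w (i + 1)) :=
    List.mem_flatMap.2 ⟨i - 1, List.mem_range.2 (by omega), by rwa [Nat.sub_add_cancel hi]⟩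
  have := List.mem_range'_1.1 (hperm.mem_iff.1 hmem)
  omega

/-- Every entry of the `s`-th shifted copies lies in `(s m, (s + 1) m]`. -/
theorem getD_concatShift_pos_lt_of_lt_shift (hlen : ∀ i, 1 ≤ i → i ≤ b → (w i).length = r)
    (hperm : ((List.range b).flatMap (fun i => w (i + 1))).Perm (List.range' 1 m))
    {blk' s' q' : ℕ} (hblk : blk < b) (hblk' : blk' < b) (hs' : s' < k) (hq : q < r)
    (hq' : q' < r) (hss' : s < s') :
    (concatShift w b k m).getD (pos k r blk s q) 0 <
      (concatShift w b k m).getD (pos k r blk' s' q') 0 := by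
  have entry_mem {i p} (hi : i < b) (hp : p < r) : 1 ≤ (w (i + 1)).getD p 0 ∧
      (w (i + 1)).getD p 0 ≤ m := by
    have hp' : p < (w (i + 1)).length := by rw [hlen (i + 1) (by omega) (by omega)]; exact hp
    exact mem_Icc_of_mem_of_perm hperm (by omega) (by omega)
      (List.getD_eq_getElem _ _ hp' ▸ List.getElem_mem hp')
  rw [getD_concatShift_pos hlen hblk (by omega) hq, getD_concatShift_pos hlen hblk' hs' hq']
  have := entry_mem hblk hq
  have := entry_mem hblk' hq'
  nlinarith

end concatShift

/-- The block visited at shift `s` by the `j`-th subsequence (`1 ≤ j ≤ t`): block `j - 1` up to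
shift `t - j`, then one block higher per shift until block `b - t + j - 1`. -/
def path (b t j s : ℕ) : ℕ := min (j - 1 + (s - (t - j))) (b - t + j - 1)

section path

variable {b t j j' k s : ℕ}

theorem path_lt (hj : 1 ≤ j) (hjt : j ≤ t) (htb : t ≤ b) : path b t j s < b := by
  unfold path; omega

theorem path_le_path_succ : path b t j s ≤ path b t j (s + 1) := by
  unfold path; omega

theorem path_mono : Monotone (path b t j) :=
  monotone_nat_of_le_succ fun _ => path_le_path_succ

theorem path_succ_le : path b t j (s + 1) ≤ path b t j s + 1 := by
  unfold path; omega

theorem path_succ_lt_path (hj : 1 ≤ j) (hjj' : j < j') (hj't : j' ≤ t) :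
    path b t j (s + 1) < path b t j' s := by
  unfold path; omega

/-- The path of `j` climbs exactly at the shifts `t - j, …, b - j - 1`, from block `i - 1` to
block `i` at the shift `s = i + t - 2 j`; all of them are `< k` as `k ≥ b - 1`. -/
theorem sum_climbs (hj : 1 ≤ j) (hjt : j ≤ t) (htb : t ≤ b) (hk : b - 1 ≤ k) (f : ℕ → ℕ) :
    ∑ s ∈ Finset.range k, (if path b t j s < path b t j (s + 1) then f (path b t j s + 1) else 0)
      = ∑ i ∈ Finset.Icc j (b + j - t - 1), f i := by
  rw [← Finset.sum_filter]
  refine Finset.sum_nbij' (· + 2 * j - t) (· + t - 2 * j) ?_ ?_ ?_ ?_ ?_ <;> intro a ha <;>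
    simp only [Finset.mem_filter, Finset.mem_range, Finset.mem_Icc] at ha ⊢ <;>
    unfold path at * <;> first | omega | (congr 1; omega)

end path

/-- The positions of `w_{β+1} w_{β+2}`, `β = path b t j s`, used at shift `s`: those of a longest
increasing subsequence `S (β + 1)` where the path climbs, the whole first row otherwise. -/
def rowSet (S : ℕ → Finset ℕ) (r b t j s : ℕ) : Finset ℕ :=
  if path b t j s < path b t j (s + 1) then S (path b t j s + 1) else Finset.range r

/-- The position in `W_k` of position `p` of `w_{β+1} w_{β+2}` in the `s`-th shifted copies. -/
def emb (k r β s p : ℕ) : ℕ := if p < r then pos k r β s p else pos k r (β + 1) s (p - r)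

def piece (S : ℕ → Finset ℕ) (k r b t j s : ℕ) : Finset ℕ :=
  (rowSet S r b t j s).image (emb k r (path b t j s) s)

def incSubseq (S : ℕ → Finset ℕ) (k r b t j : ℕ) : Finset ℕ :=
  (Finset.range k).biUnion (piece S k r b t j)

theorem emb_strictMono {k r β s : ℕ} (hs : s < k) : StrictMono (emb k r β s) := by
  intro p p' hpp'
  unfold emb
  split_ifs with hp hp' hp'
  · exact Nat.add_lt_add_left hpp' _
  · exact pos_lt_pos_of_lt_block hp hs (Nat.lt_succ_self β)
  · omega
  · exact Nat.add_lt_add_left (by omega) _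

section construction

variable {w : ℕ → List ℕ} {S : ℕ → Finset ℕ} {b r m k t j s : ℕ}

theorem getD_concatShift_emb (hlen : ∀ i, 1 ≤ i → i ≤ b → (w i).length = r) {β p : ℕ}
    (hs : s < k) (hβ : β < b) (hp : p < r ∨ p < 2 * r ∧ β + 1 < b) :
    (concatShift w b k m).getD (emb k r β s p) 0 = (w (β + 1) ++ w (β + 2)).getD p 0 + s * m := by
  have hrow := hlen (β + 1) (by omega) (by omega)
  unfold emb
  split_ifs with hpr
  · rw [getD_concatShift_pos hlen hβ hs hpr, List.getD_append _ _ _ _ (by omega)]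
  · rw [getD_concatShift_pos hlen (by omega) hs (by omega),
      List.getD_append_right _ _ _ _ (by omega), hrow]

theorem lt_of_mem_rowSet (hlen : ∀ i, 1 ≤ i → i ≤ b → (w i).length = r)
    (hS : ∀ i, IsIncSet (w i ++ w (i + 1)) (S i)) (hj : 1 ≤ j) (hjt : j ≤ t) (htb : t ≤ b)
    {p : ℕ} (hp : p ∈ rowSet S r b t j s) :
    p < r ∨ p < 2 * r ∧ path b t j (s + 1) = path b t j s + 1 := by
  unfold rowSet at hp
  split_ifs at hp with hclimb
  · have hb : path b t j (s + 1) < b := path_lt hj hjt htb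
    have := (hS _).1 p hp
    rw [List.length_append, hlen _ (by omega) (by omega), hlen _ (by omega) (by omega)] at this
    exact Or.inr ⟨by omega, le_antisymm path_succ_le hclimb⟩
  · exact Or.inl (Finset.mem_range.1 hp)

theorem exists_pos_of_mem_piece (hlen : ∀ i, 1 ≤ i → i ≤ b → (w i).length = r)
    (hS : ∀ i, IsIncSet (w i ++ w (i + 1)) (S i)) (hj : 1 ≤ j) (hjt : j ≤ t) (htb : t ≤ b)
    {x : ℕ} (hx : x ∈ piece S k r b t j s) :
    ∃ blk q, x = pos k r blk s q ∧ path b t j s ≤ blk ∧ blk ≤ path b t j (s + 1) ∧ q < r := by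
  obtain ⟨p, hp, rfl⟩ := Finset.mem_image.1 hx
  unfold emb
  split_ifs with hpr
  · exact ⟨_, p, rfl, le_rfl, path_le_path_succ, hpr⟩
  · rcases lt_of_mem_rowSet hlen hS hj hjt htb hp with hpr' | ⟨hp2r, hclimb⟩
    · exact absurd hpr' hpr
    · exact ⟨_, p - r, rfl, by omega, hclimb.ge, by omega⟩

theorem isIncSet_piece (hlen : ∀ i, 1 ≤ i → i ≤ b → (w i).length = r)
    (hsorted : ∀ i, 1 ≤ i → i ≤ b → (w i).Pairwise (· < ·))
    (hS : ∀ i, IsIncSet (w i ++ w (i + 1)) (S i)) (hj : 1 ≤ j) (hjt : j ≤ t) (htb : t ≤ b)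
    (hs : s < k) : IsIncSet (concatShift w b k m) (piece S k r b t j s) := by
  have hβ : path b t j s < b := path_lt hj hjt htb
  have hrows : IsIncSet (w (path b t j s + 1) ++ w (path b t j s + 2)) (rowSet S r b t j s) := by
    unfold rowSet
    split_ifs
    · exact hS _
    · simpa [hlen _ (by omega) hβ] using
        isIncSet_append_range_length (w (path b t j s + 2)) (hsorted _ (by omega) hβ)
  refine hrows.image (s * m) ((emb_strictMono hs).strictMonoOn _) (fun p hp => ?_) fun p hp => ?_
  · obtain ⟨blk, q, hx, -, hblk, hq⟩ :=
      exists_pos_of_mem_piece hlen hS hj hjt htb (Finset.mem_image_of_mem _ hp)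
    rw [hx]
    exact pos_lt_length_concatShift hlen (hblk.trans_lt (path_lt hj hjt htb)) hs hq
  · refine getD_concatShift_emb hlen hs hβ ?_
    rcases lt_of_mem_rowSet hlen hS hj hjt htb hp with hpr | ⟨hp2r, hclimb⟩
    · exact Or.inl hpr
    · exact Or.inr ⟨hp2r, hclimb ▸ path_lt hj hjt htb⟩

theorem card_piece (hlen : ∀ i, 1 ≤ i → i ≤ b → (w i).length = r)
    (hsorted : ∀ i, 1 ≤ i → i ≤ b → (w i).Pairwise (· < ·))
    (hScard : ∀ i, (S i).card = maxIncLen (w i ++ w (i + 1))) (hj : 1 ≤ j) (hjt : j ≤ t)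
    (htb : t ≤ b) (hs : s < k) :
    (piece S k r b t j s).card = r + if path b t j s < path b t j (s + 1) then
      maxIncLen (w (path b t j s + 1) ++ w (path b t j s + 1 + 1)) - r else 0 := by
  have hβ : path b t j s < b := path_lt hj hjt htb
  rw [piece, Finset.card_image_of_injective _ (emb_strictMono hs).injective, rowSet]
  split_ifs
  · have := length_le_maxIncLen_append (w (path b t j s + 1 + 1))
      (hsorted (path b t j s + 1) (by omega) hβ)
    rw [hlen (path b t j s + 1) (by omega) hβ] at this
    rw [hScard]
    omega
  · simp

theorem isIncSet_incSubseq (hlen : ∀ i, 1 ≤ i → i ≤ b → (w i).length = r)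
    (hsorted : ∀ i, 1 ≤ i → i ≤ b → (w i).Pairwise (· < ·))
    (hperm : ((List.range b).flatMap (fun i => w (i + 1))).Perm (List.range' 1 m))
    (hS : ∀ i, IsIncSet (w i ++ w (i + 1)) (S i)) (hj : 1 ≤ j) (hjt : j ≤ t) (htb : t ≤ b) :
    IsIncSet (concatShift w b k m) (incSubseq S k r b t j) := by
  refine IsIncSet.biUnion_range (fun s hs => isIncSet_piece hlen hsorted hS hj hjt htb hs)
    fun s s' hss' hs' a ha c hc => ?_
  obtain ⟨blk, q, rfl, -, hblk, hq⟩ := exists_pos_of_mem_piece hlen hS hj hjt htb ha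
  obtain ⟨blk', q', rfl, hblk', hblk'', hq'⟩ := exists_pos_of_mem_piece hlen hS hj hjt htb hc
  have hle : blk ≤ blk' := hblk.trans ((path_mono hss').trans hblk')
  exact ⟨pos_lt_pos_of_lt_shift hq hle hss',
    getD_concatShift_pos_lt_of_lt_shift hlen hperm (hblk.trans_lt (path_lt hj hjt htb))
      (hblk''.trans_lt (path_lt hj hjt htb)) hs' hq hq' hss'⟩

theorem disjoint_incSubseq (hlen : ∀ i, 1 ≤ i → i ≤ b → (w i).length = r)
    (hS : ∀ i, IsIncSet (w i ++ w (i + 1)) (S i)) {j' : ℕ} (hj : 1 ≤ j) (hjj' : j < j')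
    (hj't : j' ≤ t) (htb : t ≤ b) :
    Disjoint (incSubseq S k r b t j) (incSubseq S k r b t j') := by
  simp only [Finset.disjoint_left, incSubseq, Finset.mem_biUnion, Finset.mem_range]
  rintro x ⟨s, hs, hx⟩ ⟨s', hs', hx'⟩
  obtain ⟨blk, q, rfl, -, hblk, hq⟩ := exists_pos_of_mem_piece hlen hS hj (by omega) htb hx
  obtain ⟨blk', q', heq, hblk', -, hq'⟩ :=
    exists_pos_of_mem_piece hlen hS (by omega) hj't htb hx'
  obtain ⟨rfl, rfl, -⟩ := pos_inj hs hs' hq hq' heq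
  exact absurd (path_succ_lt_path (b := b) (s := s) hj hjj' hj't) (by omega)

theorem card_incSubseq (hlen : ∀ i, 1 ≤ i → i ≤ b → (w i).length = r)
    (hsorted : ∀ i, 1 ≤ i → i ≤ b → (w i).Pairwise (· < ·))
    (hS : ∀ i, IsIncSet (w i ++ w (i + 1)) (S i))
    (hScard : ∀ i, (S i).card = maxIncLen (w i ++ w (i + 1))) (hj : 1 ≤ j) (hjt : j ≤ t)
    (htb : t ≤ b) (hk : b - 1 ≤ k) :
    (incSubseq S k r b t j).card =
      k * r + ∑ i ∈ Finset.Icc j (b + j - t - 1), (maxIncLen (w i ++ w (i + 1)) - r) := by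
  have hdisj : (Finset.range k : Set ℕ).PairwiseDisjoint (piece S k r b t j) := by
    intro s hs s' hs' hss'
    simp only [Function.onFun, Finset.disjoint_left]
    intro x hx hx'
    obtain ⟨blk, q, rfl, -, -, hq⟩ := exists_pos_of_mem_piece hlen hS hj hjt htb hx
    obtain ⟨blk', q', heq, -, -, hq'⟩ := exists_pos_of_mem_piece hlen hS hj hjt htb hx'
    exact hss' (pos_inj (Finset.mem_range.1 hs) (Finset.mem_range.1 hs') hq hq' heq).2.1
  rw [incSubseq, Finset.card_biUnion hdisj,
    Finset.sum_congr rfl fun s hs =>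
      card_piece hlen hsorted hScard hj hjt htb (Finset.mem_range.1 hs),
    Finset.sum_add_distrib, Finset.sum_const, Finset.card_range, smul_eq_mul,
    sum_climbs hj hjt htb hk fun i => maxIncLen (w i ++ w (i + 1)) - r]

end construction

end DisjointIncSubseqs

theorem shupperbound_general (b r : ℕ) (m : ℕ)
    (w : ℕ → List ℕ)
    (hlen : ∀ i, 1 ≤ i → i ≤ b → (w i).length = r)
    (hsorted : ∀ i, 1 ≤ i → i ≤ b → (w i).Pairwise (· < ·))
    (hperm : ((List.range b).flatMap (fun i => w (i + 1))).Perm (List.range' 1 m)) :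
    ∀ k, b - 1 ≤ k → ∀ t, 1 ≤ t → t ≤ b →
      ∃ f : ℕ → Finset ℕ,
        (∀ j, 1 ≤ j → j ≤ t → IsIncSet (concatShift w b k m) (f j)) ∧
        (∀ i j, 1 ≤ i → i ≤ t → 1 ≤ j → j ≤ t → i ≠ j → Disjoint (f i) (f j)) ∧
        (∀ j, 1 ≤ j → j ≤ t →
          (f j).card = k * r + ∑ i ∈ Finset.Icc j (b + j - t - 1),
            (maxIncLen (w i ++ w (i + 1)) - r)) := by
  intro k hk t _ htb
  choose S hS hScard using fun i => exists_isIncSet_card_eq_maxIncLen (w i ++ w (i + 1))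
  open DisjointIncSubseqs in
  refine ⟨incSubseq S k r b t, fun j hj hjt => isIncSet_incSubseq hlen hsorted hperm hS hj hjt htb,
    fun i j hi hit hj hjt hij => ?_,
    fun j hj hjt => card_incSubseq hlen hsorted hS hScard hj hjt htb hk⟩
  rcases hij.lt_or_gt with h | h
  · exact DisjointIncSubseqs.disjoint_incSubseq hlen hS hi h hjt htb
  · exact (DisjointIncSubseqs.disjoint_incSubseq hlen hS hj h hit htb).symm

/-- Fix `b, r ≥ 1`, `m = br`, and let `w_1, …, w_b` be strictly increasing words
of length `r` whose entries together are exactly `1, …, m`.  Let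
`c_i = (max length of an increasing subsequence of w_i w_{i+1}) − r`.  Then for
every `k ≥ b−1` and `1 ≤ t ≤ b` there exist `t` pairwise position-disjoint
strictly increasing subsequences `y_1, …, y_t` of
`W_k = w_1^{(k,m)} ⋯ w_b^{(k,m)}` with `y_j` of length
`k·r + ∑_{i=j}^{b+j−t−1} c_i`. -/
theorem shupperbound (b r : ℕ) (hb : 1 ≤ b) (hr : 1 ≤ r) (m : ℕ) (hm : m = b * r)
    (w : ℕ → List ℕ)
    (hlen : ∀ i, 1 ≤ i → i ≤ b → (w i).length = r)
    (hsorted : ∀ i, 1 ≤ i → i ≤ b → (w i).Pairwise (· < ·))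
    (hperm : ((List.range b).flatMap (fun i => w (i + 1))).Perm (List.range' 1 m)) :
    ∀ k, b - 1 ≤ k → ∀ t, 1 ≤ t → t ≤ b →
      ∃ f : ℕ → Finset ℕ,
        (∀ j, 1 ≤ j → j ≤ t → IsIncSet (concatShift w b k m) (f j)) ∧
        (∀ i j, 1 ≤ i → i ≤ t → 1 ≤ j → j ≤ t → i ≠ j → Disjoint (f i) (f j)) ∧
        (∀ j, 1 ≤ j → j ≤ t →
          (f j).card = k * r + ∑ i ∈ Finset.Icc j (b + j - t - 1),
            (maxIncLen (w i ++ w (i + 1)) - r)) :=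
  shupperbound_general b r m w hlen hsorted hperm
end

section
/- Let n ≥ 1 and r ≥ 1, and let w = w_1 w_2 ⋯ w_n be a word listing each of the integers 1, 2, …, n exactly once. Let W be the word of length n·r whose ((j−1)r + i)-th entry is w_j + (i−1)·n, for 1 ≤ j ≤ n and 1 ≤ i ≤ r (so W consists of the consecutive blocks w_j, w_j + n, …, w_j + (r−1)n for j = 1, …, n). If W has a strictly decreasing subsequence of length n, i.e., positions p_1 < p_2 < ⋯ < p_n with W_{p_1} > W_{p_2} > ⋯ > W_{p_n}, then w has at most r − 1 ascents, i.e., #{i : 1 ≤ i ≤ n−1 and w_i < w_{i+1}} ≤ r − 1. -/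
/-!
Block `j` of `W` is `w_{j+1} + i n` for the levels `i < r`, increasing in `i`, so a strictly
decreasing subsequence of length `n` takes exactly one entry from each block: its `a`-th term is
`w_{a+1} + ℓ_a n` for some level `ℓ_a < r`. As `1 ≤ w ≤ n`, the levels are weakly decreasing and
drop strictly at every ascent of `w`, so there are at most `ℓ_0 ≤ r - 1` ascents.
-/

open Finset

theorem List.flatMap_range_map_range (n r : ℕ) (g : ℕ → ℕ → ℕ) :
    (List.range n).flatMap (fun j => (List.range r).map (g j)) =
      (List.range (n * r)).map fun k => g (k / r) (k % r) := by
  induction n with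
  | zero => simp
  | succ n ih =>
    rw [List.range_succ, List.flatMap_append, ih, Nat.succ_mul, List.range_add,
      List.map_append, List.flatMap_singleton, List.map_map]
    congr 1
    refine List.map_congr_left fun i hi => ?_
    have hi : i < r := List.mem_range.mp hi
    have hr : 0 < r := by omega
    simp [Nat.mul_comm n r, Nat.mul_add_div hr, Nat.div_eq_of_lt hi, Nat.mod_eq_of_lt hi]

theorem strictMono_div_of_strictAnti {α : Type*} [Preorder α] {r : ℕ} {p : α → ℕ}
    {g : ℕ → ℕ → ℕ} (hg : ∀ j, StrictMono (g j)) (hp : StrictMono p)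
    (hdec : StrictAnti fun a => g (p a / r) (p a % r)) : StrictMono fun a => p a / r := by
  intro a b hab
  refine (Nat.div_le_div_right (hp hab).le).lt_of_ne fun hblock => ?_
  have hmod : p a % r < p b % r := by
    have := hp hab
    have := Nat.div_add_mod (p a) r
    have := Nat.div_add_mod (p b) r
    rw [hblock] at *
    omega
  have hba := hdec hab
  dsimp only at hba
  rw [← hblock] at hba
  exact (hg _ hmod).not_gt hba

theorem Fin.val_eq_of_strictMono {n : ℕ} {f : Fin n → ℕ} (hf : StrictMono f)
    (hlt : ∀ a, f a < n) (a : Fin n) : f a = a :=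
  congrArg Fin.val (StrictMono.apply_eq (f := fun a => ⟨f a, hlt a⟩) hf)

theorem Nat.le_of_add_mul_lt_add_mul {n x y s t : ℕ} (hx : x ≤ n)
    (h : y + s * n < x + t * n) : s ≤ t := by
  by_contra! hts
  have := Nat.mul_le_mul_right n hts
  rw [Nat.succ_mul] at this
  omega

theorem Nat.lt_of_add_mul_lt_add_mul {n x y s t : ℕ} (hxy : x < y)
    (h : y + s * n < x + t * n) : s < t := by
  by_contra! hts
  have := Nat.mul_le_mul_right n hts
  omega

theorem card_filter_Icc_le_of_antitoneOn {f : ℕ → ℕ} {m : ℕ} (P : ℕ → Prop) [DecidablePred P]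
    (hf : AntitoneOn f (Set.Iic m)) (hP : ∀ i ∈ Icc 1 m, P i → f i < f (i - 1)) :
    #{i ∈ Icc 1 m | P i} ≤ f 0 := by
  have hdrop : ∀ i ∈ ({i ∈ Icc 1 m | P i} : Finset ℕ), ∀ j ≤ i - 1, f i < f j := by
    intro i hi j hj
    simp only [mem_filter, mem_Icc] at hi
    exact (hP i (mem_Icc.2 hi.1) hi.2).trans_le
      (hf (Set.mem_Iic.2 (by omega)) (Set.mem_Iic.2 (by omega)) hj)
  have hinj : Set.InjOn f (({i ∈ Icc 1 m | P i} : Finset ℕ) : Set ℕ) :=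
    StrictAntiOn.injOn fun i _ j hj hij => hdrop j hj i (by omega)
  simpa using card_le_card_of_injOn f (fun i hi => mem_range.2 (hdrop i hi 0 (Nat.zero_le _))) hinj

theorem card_ascents_le_of_add_mul_lt {n : ℕ} {w ℓ : ℕ → ℕ} (hwn : ∀ j < n, w (j + 1) ≤ n)
    (hℓ : ∀ i j, i < j → j < n → w (j + 1) + ℓ j * n < w (i + 1) + ℓ i * n) :
    #{i ∈ Icc 1 (n - 1) | w i < w (i + 1)} ≤ ℓ 0 := by
  refine card_filter_Icc_le_of_antitoneOn _ (fun i _ j hj hij => ?_) fun i hi hasc => ?_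
  · rcases hij.eq_or_lt with rfl | hij
    · exact le_rfl
    have hjn : j < n := by have := Set.mem_Iic.1 hj; omega
    exact Nat.le_of_add_mul_lt_add_mul (hwn i (hij.trans hjn)) (hℓ i j hij hjn)
  · rw [mem_Icc] at hi
    refine Nat.lt_of_add_mul_lt_add_mul ?_ (hℓ (i - 1) i (by omega) (by omega))
    rwa [Nat.sub_add_cancel hi.1]

theorem ascentbound_general (n r : ℕ) (w : ℕ → ℕ)
    (hw : ((List.range n).map (fun j => w (j + 1))).Perm (List.range' 1 n))
    (W : List ℕ)
    (hW : W = (List.range n).flatMap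
      (fun j => (List.range r).map (fun i => w (j + 1) + i * n)))
    (hdec : ∃ p : Fin n → ℕ, StrictMono p ∧ (∀ a, p a < W.length) ∧
      ∀ a b : Fin n, a < b → W.getD (p b) 0 < W.getD (p a) 0) :
    ((Finset.Icc 1 (n - 1)).filter (fun i => w i < w (i + 1))).card ≤ r - 1 := by
  obtain ⟨p, hp, hpW, hpdec⟩ := hdec
  rcases Nat.eq_zero_or_pos n with rfl | hn
  · simp
  have hWmap : W = (List.range (n * r)).map fun k => w (k / r + 1) + k % r * n :=
    hW.trans (List.flatMap_range_map_range n r fun j i => w (j + 1) + i * n)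
  have hpr : ∀ a, p a < n * r := fun a => by simpa [hWmap] using hpW a
  have hr : 0 < r := Nat.pos_of_mul_pos_left (Nat.zero_lt_of_lt (hpr ⟨0, hn⟩))
  have hWp : StrictAnti fun a => w (p a / r + 1) + p a % r * n := fun a b hab => by
    simpa [hWmap, List.getD_eq_getElem?_getD, hpr] using hpdec a b hab
  have hblock : ∀ a, p a / r = a := Fin.val_eq_of_strictMono
    (strictMono_div_of_strictAnti (g := fun j i => w (j + 1) + i * n)
      (fun j i k hik => Nat.add_lt_add_left (Nat.mul_lt_mul_of_pos_right hik hn) _) hp hWp)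
    fun a => Nat.div_lt_of_lt_mul (Nat.mul_comm n r ▸ hpr a)
  set ℓ : ℕ → ℕ := fun j => if h : j < n then p ⟨j, h⟩ % r else 0
  have hℓ : ∀ i j, i < j → j < n → w (j + 1) + ℓ j * n < w (i + 1) + ℓ i * n := by
    intro i j hij hj
    simpa [ℓ, hj, hij.trans hj, hblock] using
      hWp (show (⟨i, hij.trans hj⟩ : Fin n) < ⟨j, hj⟩ from hij)
  have hwn : ∀ j < n, w (j + 1) ≤ n := fun j hj => by
    have := List.mem_range'_1.mp (hw.mem_iff.mp (List.mem_map_of_mem (List.mem_range.2 hj)))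
    omega
  have hℓr : ℓ 0 < r := by simpa only [ℓ, dif_pos hn] using Nat.mod_lt _ hr
  exact (card_ascents_le_of_add_mul_lt hwn hℓ).trans (by omega)

/-- Let `w = w_1 ⋯ w_n` list each of `1, …, n` exactly once, and let `W` be the
word of length `n·r` whose `((j−1)r + i)`-th entry is `w_j + (i−1)·n` (blocks
`w_j, w_j + n, …, w_j + (r−1)n` for `j = 1, …, n`).  If `W` has a strictly
decreasing subsequence of length `n`, then `w` has at most `r − 1` ascents. -/
theorem ascentbound (n r : ℕ) (hn : 1 ≤ n) (hr : 1 ≤ r) (w : ℕ → ℕ)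
    (hw : ((List.range n).map (fun j => w (j + 1))).Perm (List.range' 1 n))
    (W : List ℕ)
    (hW : W = (List.range n).flatMap
      (fun j => (List.range r).map (fun i => w (j + 1) + i * n)))
    (hdec : ∃ p : Fin n → ℕ, StrictMono p ∧ (∀ a, p a < W.length) ∧
      ∀ a b : Fin n, a < b → W.getD (p b) 0 < W.getD (p a) 0) :
    ((Finset.Icc 1 (n - 1)).filter (fun i => w i < w (i + 1))).card ≤ r - 1 :=
  ascentbound_general n r w hw W hW hdec
end
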